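/- Work in the good-parity setting, half-integer case. Let c, n ∈ ℕ and let (𝔪, ε) be the signed symmetric multisegment with 𝔪 = c·[−1/2,1/2] + n·([−1/2,−1/2] + [1/2,1/2]), and (when c ≠ 0) write ε = ε([−1/2,1/2]). Let (*) be the condition: c ≠ 0 and ε = (−1)^{n+1}. Then AD(𝔪, ε) = (𝔪', ε') is of the same shape, 𝔪' = c'·[−1/2,1/2] + n'·([−1/2,−1/2] + [1/2,1/2]) with ε' = ε'([−1/2,1/2]), where: (1) if (*) holds, then c' = n + 1, n' = c − 1 and ε' = (−1)^c; (2) if (*) does not hold, then c' = n, n' = c and ε' = (−1)^c (the value ε' being relevant only when c' ≠ 0). -/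

import Mathlib

namespace AZ

/-- A segment in doubled coordinates: the pair `(a, b)` represents the segment
`[a/2, b/2]` whose endpoints lie in `(1/2)ℤ`.  Thus the end `e(Δ)` is `Δ.2 / 2`,
the beginning `b(Δ)` is `Δ.1 / 2`, `Δ` is centered iff `Δ.1 + Δ.2 = 0`, and
`c(Δ) = 1/2` iff `Δ.1 + Δ.2 = 2`. -/
abbrev Seg := ℤ × ℤ

namespace Seg

/-- Well-formedness of a segment: `a ≤ b` and `a ≡ b [ZMOD 2]`, i.e. `b - a ∈ 2ℕ`. -/
def WF (Δ : Seg) : Prop := Δ.1 ≤ Δ.2 ∧ Δ.1 % 2 = Δ.2 % 2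

/-- The dual (contragredient) segment `Δ∨ = [−b, −a]`. -/
def dual (Δ : Seg) : Seg := (-Δ.2, -Δ.1)

/-- `Δ⁻` : the segment with its end removed. -/
def trimEnd (Δ : Seg) : Seg := (Δ.1, Δ.2 - 2)

/-- `⁻Δ` : the segment with its beginning removed. -/
def trimBeg (Δ : Seg) : Seg := (Δ.1 + 2, Δ.2)

/-- `⁺Δ` : the segment with its beginning extended. -/
def extBeg (Δ : Seg) : Seg := (Δ.1 - 2, Δ.2)

/-- The order on segments: `[x₁,y₁] ≤ [x₂,y₂]` iff `x₁ < x₂`, or `x₁ = x₂` and `y₁ ≥ y₂`. -/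
def le (Δ₁ Δ₂ : Seg) : Prop := Δ₁.1 < Δ₂.1 ∨ (Δ₁.1 = Δ₂.1 ∧ Δ₂.2 ≤ Δ₁.2)

end Seg

/-- Labels `≤0`, `=0`, `≥0` for labeled segments. -/
inductive Label
  | le0 | eq0 | ge0
deriving DecidableEq

/-- Numerical index of a label, used to order the labels `≤0 < =0 < ≥0`. -/
def Label.idx : Label → ℕ
  | .le0 => 0
  | .eq0 => 1
  | .ge0 => 2

/-- A labeled segment: a segment together with a label. -/
abbrev LSeg := Seg × Label

namespace LSeg

/-- The order `⪯` on labeled segments: segments labeled `≤0` precede those labeled `=0`,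
which precede those labeled `≥0`; for equal labels `≥0` or `≤0` one compares the segments,
and for label `=0` one compares the ends. -/
def le (Λ₁ Λ₂ : LSeg) : Prop :=
  Λ₁.2.idx < Λ₂.2.idx ∨
    (Λ₁.2 = Λ₂.2 ∧
      if Λ₁.2 = Label.eq0 then Λ₁.1.2 ≤ Λ₂.1.2 else Seg.le Λ₁.1 Λ₂.1)

/-- The strict order `≺` on labeled segments. -/
def lt (Λ₁ Λ₂ : LSeg) : Prop := LSeg.le Λ₁ Λ₂ ∧ Λ₁ ≠ Λ₂

/-- The contragredient of a labeled segment: for a centered segment the label `≤0`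
becomes `≥0` and the labels `=0`, `≥0` are kept; for a non-centered segment the
label is flipped. -/
def dual (Λ : LSeg) : LSeg :=
  (Seg.dual Λ.1,
    if Λ.1.1 + Λ.1.2 = 0 then (if Λ.2 = Label.le0 then Label.ge0 else Λ.2)
    else
      match Λ.2 with
      | Label.le0 => Label.ge0
      | Label.eq0 => Label.eq0
      | Label.ge0 => Label.le0)

end LSeg

/-- The forced label of a non-centered segment. -/
def forcedLabel (Δ : Seg) : Label := if 0 < Δ.1 + Δ.2 then Label.ge0 else Label.le0

/-- The labeling `s(𝔪)` of a multisegment: each non-centered segment gets its forced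
label; a centered segment of multiplicity `m` contributes `⌊m/2⌋` copies labeled `≤0`,
`⌊m/2⌋` copies labeled `≥0`, and `m − 2⌊m/2⌋` copies labeled `=0`. -/
def smap (m : Multiset Seg) : Multiset LSeg :=
  (m.filter fun Δ => ¬ Δ.1 + Δ.2 = 0).map (fun Δ => (Δ, forcedLabel Δ)) +
    (m.toFinset.filter fun Δ => Δ.1 + Δ.2 = 0).val.bind (fun Δ =>
      Multiset.replicate (m.count Δ / 2) (Δ, Label.le0) +
        Multiset.replicate (m.count Δ / 2) (Δ, Label.ge0) +
        Multiset.replicate (m.count Δ % 2) (Δ, Label.eq0))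

/-- A labeled segment is special (the initial sequence stops there): `[0,0]` labeled
`≥0` or `=0` in the integer case; `[1/2,1/2]`, or `[−1/2,1/2]` labeled `≥0` or `=0`
with `ε([−1/2,1/2]) = −1`, in the half-integer case. -/
def Special (ε : Seg → ℤ) (Λ : LSeg) : Prop :=
  (Λ.1 = ((0 : ℤ), (0 : ℤ)) ∧ (Λ.2 = Label.ge0 ∨ Λ.2 = Label.eq0)) ∨
    Λ.1 = ((1 : ℤ), (1 : ℤ)) ∨
      (Λ.1 = ((-1 : ℤ), (1 : ℤ)) ∧ (Λ.2 = Label.ge0 ∨ Λ.2 = Label.eq0) ∧ ε (-1, 1) = -1)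

instance (ε : Seg → ℤ) (Λ : LSeg) : Decidable (Special ε Λ) := by
  unfold Special; infer_instance

/-- The condition for `next` to be a successor of `cur` in the initial sequence:
`next ≺ cur`, `e(next) = e(cur) − 1`, and opposite signs when both are centered. -/
def Succ (ε : Seg → ℤ) (cur next : LSeg) : Prop :=
  LSeg.lt next cur ∧ next.1.2 = cur.1.2 - 2 ∧
    (cur.1.1 + cur.1.2 = 0 → next.1.1 + next.1.2 = 0 → ε next.1 = - ε cur.1)

/-- `Δ 1, …, Δ l` is the initial sequence in the algorithm for `(m, ε)`:
`Δ 1` is the `⪯`-largest element of `s(m)` with maximal end; recursively,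
`Δ (j+1)` is the `⪯`-largest successor of `Δ j`; the sequence stops when the
current segment is special or no successor exists. -/
structure IsInitSeq (m : Multiset Seg) (ε : Seg → ℤ) (Δ : ℕ → LSeg) (l : ℕ) : Prop where
  one_le : 1 ≤ l
  mem : ∀ j, 1 ≤ j → j ≤ l → Δ j ∈ smap m
  first_max_end : ∀ Λ ∈ smap m, Λ.1.2 ≤ (Δ 1).1.2
  first_max : ∀ Λ ∈ smap m, Λ.1.2 = (Δ 1).1.2 → LSeg.le Λ (Δ 1)
  not_special : ∀ j, 1 ≤ j → j < l → ¬ Special ε (Δ j)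
  succ : ∀ j, 1 ≤ j → j < l → Succ ε (Δ j) (Δ (j + 1))
  succ_max : ∀ j, 1 ≤ j → j < l → ∀ Λ ∈ smap m, Succ ε (Δ j) Λ → LSeg.le Λ (Δ (j + 1))
  last : Special ε (Δ l) ∨ ∀ Λ ∈ smap m, ¬ Succ ε (Δ l) Λ

/-- The sign `ε₀`: `−1` if the sequence stopped at a special segment, `1` otherwise. -/
def eps0 (ε : Seg → ℤ) (Δ : ℕ → LSeg) (l : ℕ) : ℤ :=
  if Special ε (Δ l) then -1 else 1

/-- The number `n₀` of centered segments of `m`. -/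
def nCentered (m : Multiset Seg) : ℕ := (m.filter fun Δ => Δ.1 + Δ.2 = 0).card

/-- The sign `ε₁` of the centered segment `𝔪₁` in the case `ε₀ = −1`:
`(−1)^(n₀+1)·ε([0,0])` in the integer case, `(−1)^(n₀)` in the half-integer case. -/
def epsOne (m : Multiset Seg) (ε : Seg → ℤ) (Δ : ℕ → LSeg) : ℤ :=
  if (Δ 1).1.2 % 2 = 0 then (-1) ^ (nCentered m + 1) * ε (0, 0)
  else (-1) ^ nCentered m

/-- The signed multisegment `𝔪₁`: if `ε₀ = −1` it is the centered segment
`[−e(Δ₁), e(Δ₁)]` with sign `ε₁`; otherwise it is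
`[e(Δ_l), e(Δ₁)] + [−e(Δ₁), −e(Δ_l)]` (non-centered segments carry sign `1`). -/
def mOne (m : Multiset Seg) (ε : Seg → ℤ) (Δ : ℕ → LSeg) (l : ℕ) : Multiset (Seg × ℤ) :=
  if Special ε (Δ l) then {((-(Δ 1).1.2, (Δ 1).1.2), epsOne m ε Δ)}
  else {(((Δ l).1.2, (Δ 1).1.2), 1), ((-(Δ 1).1.2, -(Δ l).1.2), 1)}

/-- The labeled copies `Δ 1, …, Δ l` whose end gets removed. -/
def DEnd (Δ : ℕ → LSeg) (l : ℕ) : Multiset LSeg := (Finset.Icc 1 l).val.map Δ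

/-- The labeled copies (the contragredients of the `Δ j`) whose beginning gets removed. -/
def DBeg (Δ : ℕ → LSeg) (l : ℕ) : Multiset LSeg := (DEnd Δ l).map LSeg.dual

/-- The labeled copies trimmed on both sides. -/
def DBoth (Δ : ℕ → LSeg) (l : ℕ) : Multiset LSeg := DEnd Δ l ∩ DBeg Δ l

/-- The multisegment `𝔪#`: remove the ends of the `Δ j` and the beginnings of their
contragredients (one labeled copy each, both trims if the copy occurs in both lists),
keep all other copies, and discard empty segments. -/
def mHash (m : Multiset Seg) (Δ : ℕ → LSeg) (l : ℕ) : Multiset Seg :=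
  (smap m - DEnd Δ l - (DBeg Δ l - DBoth Δ l)).map Prod.fst +
    ((DBoth Δ l).map (fun Λ => ((Λ.1.1 + 2, Λ.1.2 - 2) : Seg)) +
        (DEnd Δ l - DBoth Δ l).map (fun Λ => ((Λ.1.1, Λ.1.2 - 2) : Seg)) +
        (DBeg Δ l - DBoth Δ l).map (fun Λ => ((Λ.1.1 + 2, Λ.1.2) : Seg))).filter
      fun Δ0 => Δ0.1 ≤ Δ0.2

/-- The trimmed segment `Λ_{i_j}#` obtained from `Δ j`. -/
def trimAt (Δ : ℕ → LSeg) (l : ℕ) (j : ℕ) : Seg :=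
  if Δ j ∈ DBeg Δ l then ((Δ j).1.1 + 2, (Δ j).1.2 - 2)
  else ((Δ j).1.1, (Δ j).1.2 - 2)

/-- The sign function `ε#` on (centered) segments of `𝔪#`. -/
def epsHash (m : Multiset Seg) (ε : Seg → ℤ) (Δ : ℕ → LSeg) (l : ℕ) : Seg → ℤ :=
  fun Δ0 =>
    if ∃ j ∈ Finset.Icc 1 l, ((Δ j).1.1 + (Δ j).1.2 = 0 ∧ trimAt Δ l j = Δ0) then
      eps0 ε Δ l * ε (Δ0.1 - 2, Δ0.2 + 2)
    else if ∃ j ∈ Finset.Icc 1 l,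
        ((Δ j).1.1 + (Δ j).1.2 = 2 ∧ trimAt Δ l j = Δ0 ∧ Δ0 ∉ m) then
      eps0 ε Δ l
    else if ∃ j ∈ Finset.Icc 1 l,
        ((Δ j).1.1 + (Δ j).1.2 = 2 ∧ trimAt Δ l j = Δ0 ∧ Δ0 ∈ m) then
      -(eps0 ε Δ l) * ε Δ0
    else eps0 ε Δ l * ε Δ0

/-- The good-parity duality algorithm `AD`, as a relation between the input `(m, ε)`
and the output signed multisegment: `AD(0) = 0` and
`AD(𝔪, ε) = (𝔪₁, ε₁) + AD(𝔪#, ε#)`. -/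
inductive IsAD : Multiset Seg → (Seg → ℤ) → Multiset (Seg × ℤ) → Prop
  | zero (ε : Seg → ℤ) : IsAD 0 ε 0
  | step {m : Multiset Seg} {ε : Seg → ℤ} {Δ : ℕ → LSeg} {l : ℕ} {d : Multiset (Seg × ℤ)}
      (hm : m ≠ 0) (hseq : IsInitSeq m ε Δ l)
      (hrec : IsAD (mHash m Δ l) (epsHash m ε Δ l) d) :
      IsAD m ε (mOne m ε Δ l + d)

/-- A valid signed symmetric multisegment in the good-parity setting. -/
structure GoodInput (m : Multiset Seg) (ε : Seg → ℤ) : Prop where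
  wf : ∀ Δ0 ∈ m, Seg.WF Δ0
  symm : m.map Seg.dual = m
  parity : ∀ Δ₁ ∈ m, ∀ Δ₂ ∈ m, Δ₁.2 % 2 = Δ₂.2 % 2
  sign : ∀ Δ0, ε Δ0 = 1 ∨ ε Δ0 = -1

/-!
On `c·[−1/2,1/2] + n·([−1/2,−1/2] + [1/2,1/2])` every initial sequence has length one. While
`n > 0` it is the special segment `[1/2,1/2]`: the step contributes `[−1/2,1/2]` with sign
`(−1)^c`, removes one pair `[−1/2,−1/2] + [1/2,1/2]` and flips `ε([−1/2,1/2])`. Once `n = 0` it is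
a self-dual copy of `[−1/2,1/2]`, special exactly when its sign is `−1`; each such step removes one
copy, contributes `[−1/2,1/2]` if special and `[−1/2,−1/2] + [1/2,1/2]` otherwise, and leaves the
sign `≠ −1`, so at most the first of these steps is special. That happens iff `c ≠ 0` and
`(−1)^n ε([−1/2,1/2]) = −1`.
-/

open Multiset

theorem map_fst_smap (m : Multiset Seg) : (smap m).map Prod.fst = m := by
  set p : Seg → Prop := fun Δ => Δ.1 + Δ.2 = 0
  have hcount : ∀ Δ ∈ (m.filter p).toFinset, replicate (m.count Δ / 2) Δ +
      replicate (m.count Δ / 2) Δ + replicate (m.count Δ % 2) Δ = (m.filter p).count Δ • {Δ} := by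
    intro Δ hΔ
    rw [count_filter_of_pos (of_mem_filter (mem_toFinset.1 hΔ)), nsmul_singleton,
      ← replicate_add, ← replicate_add]
    congr 1
    omega
  have hcentered : ((m.toFinset.filter p).val.bind fun Δ =>
      replicate (m.count Δ / 2) Δ + replicate (m.count Δ / 2) Δ + replicate (m.count Δ % 2) Δ)
      = m.filter p := calc
    _ = ∑ Δ ∈ (m.filter p).toFinset, (replicate (m.count Δ / 2) Δ +
          replicate (m.count Δ / 2) Δ + replicate (m.count Δ % 2) Δ) := by
      rw [toFinset_filter]; rfl
    _ = m.filter p := by rw [Finset.sum_congr rfl hcount, toFinset_sum_count_nsmul_eq]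
  rw [smap, Multiset.map_add, map_map, map_bind]
  simp only [Multiset.map_add, map_replicate]
  rw [hcentered, add_comm, Function.comp_def, map_id', filter_add_not]

theorem fst_mem_of_mem_smap {m : Multiset Seg} {Λ : LSeg} (h : Λ ∈ smap m) : Λ.1 ∈ m :=
  map_fst_smap m ▸ mem_map_of_mem _ h

theorem smap_cons_of_not_centered {Δ : Seg} (h : Δ.1 + Δ.2 ≠ 0) (m : Multiset Seg) :
    smap (Δ ::ₘ m) = (Δ, forcedLabel Δ) ::ₘ smap m := by
  have hcount : ∀ Δ' ∈ (m.toFinset.filter fun Δ => Δ.1 + Δ.2 = 0).val,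
      count Δ' (Δ ::ₘ m) = count Δ' m := fun Δ' hΔ' =>
    count_cons_of_ne (by rintro rfl; exact h (Finset.mem_filter.1 hΔ').2) _
  rw [smap, smap, filter_cons_of_pos m h, map_cons, cons_add, toFinset_cons,
    Finset.filter_insert, if_neg h]
  congr 2
  exact Multiset.bind_congr fun Δ' hΔ' => by rw [hcount Δ' hΔ']

theorem smap_replicate_of_centered {Δ : Seg} (h : Δ.1 + Δ.2 = 0) (c : ℕ) :
    smap (replicate c Δ) = replicate (c / 2) (Δ, Label.le0) + replicate (c / 2) (Δ, Label.ge0) +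
      replicate (c % 2) (Δ, Label.eq0) := by
  have hfilter : (replicate c Δ).filter (fun Δ => ¬ Δ.1 + Δ.2 = 0) = 0 :=
    filter_eq_nil.2 fun _ hΔ' => by rw [eq_of_mem_replicate hΔ']; exact not_not.2 h
  rcases Nat.eq_zero_or_pos c with rfl | hc
  · simp [smap]
  · simp [smap, hfilter, toFinset_replicate, hc.ne', filter_singleton, h]

theorem DEnd_one (Δ : ℕ → LSeg) : DEnd Δ 1 = {Δ 1} := by
  simp [DEnd]

theorem DBeg_one (Δ : ℕ → LSeg) : DBeg Δ 1 = {LSeg.dual (Δ 1)} := by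
  simp [DBeg, DEnd_one]

theorem mHash_one_of_dual_eq {m : Multiset Seg} {Δ : ℕ → LSeg} (hdual : LSeg.dual (Δ 1) = Δ 1)
    (hempty : (Δ 1).1.2 - 2 < (Δ 1).1.1 + 2) :
    mHash m Δ 1 = ((smap m).erase (Δ 1)).map Prod.fst := by
  have hboth : DBoth Δ 1 = {Δ 1} := by
    rw [DBoth, DEnd_one, DBeg_one, hdual, ← inf_eq_inter, inf_idem]
  rw [mHash, hboth, DEnd_one, DBeg_one, hdual]
  simp [filter_singleton, not_le.2 hempty]

theorem mHash_one_of_dual_ne {m : Multiset Seg} {Δ : ℕ → LSeg} (hdual : LSeg.dual (Δ 1) ≠ Δ 1)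
    (hempty : (Δ 1).1.2 - 2 < (Δ 1).1.1) :
    mHash m Δ 1 = (((smap m).erase (Δ 1)).erase (LSeg.dual (Δ 1))).map Prod.fst := by
  have hboth : DBoth Δ 1 = 0 := by
    rw [DBoth, DEnd_one, DBeg_one, inter_eq_zero_iff_disjoint, disjoint_singleton]
    simpa using hdual
  rw [mHash, hboth, DEnd_one, DBeg_one]
  have hempty' : ¬ -(Δ 1).1.2 + 2 ≤ -(Δ 1).1.1 := by omega
  simp [LSeg.dual, Seg.dual, filter_singleton, not_le.2 hempty, hempty']

theorem trimAt_snd (Δ : ℕ → LSeg) (l j : ℕ) : (trimAt Δ l j).2 = (Δ j).1.2 - 2 := by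
  unfold trimAt; split_ifs <;> rfl

theorem epsHash_of_forall_end_ne {m : Multiset Seg} {ε : Seg → ℤ} {Δ : ℕ → LSeg} {l : ℕ}
    {x : Seg} (hx : ∀ j ∈ Finset.Icc 1 l, x.2 ≠ (Δ j).1.2 - 2) :
    epsHash m ε Δ l x = eps0 ε Δ l * ε x := by
  have hne : ∀ j ∈ Finset.Icc 1 l, trimAt Δ l j ≠ x := fun j hj h =>
    hx j hj (by rw [← h, trimAt_snd])
  rw [epsHash, if_neg fun ⟨j, hj, _, h⟩ => hne j hj h,
    if_neg fun ⟨j, hj, _, h, _⟩ => hne j hj h, if_neg fun ⟨j, hj, _, h, _⟩ => hne j hj h]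

theorem IsAD.eq_zero {ε : Seg → ℤ} {d : Multiset (Seg × ℤ)} (had : IsAD 0 ε d) : d = 0 := by
  cases had with
  | zero => rfl
  | step hm => exact absurd rfl hm

theorem IsAD.exists_step {m : Multiset Seg} {ε : Seg → ℤ} {d : Multiset (Seg × ℤ)}
    (had : IsAD m ε d) (hm : m ≠ 0) :
    ∃ Δ l d', IsInitSeq m ε Δ l ∧ IsAD (mHash m Δ l) (epsHash m ε Δ l) d' ∧
      d = mOne m ε Δ l + d' := by
  cases had with
  | zero => exact absurd rfl hm
  | step _ hseq hrec => exact ⟨_, _, _, hseq, hrec, rfl⟩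

namespace IsInitSeq

variable {m : Multiset Seg} {ε : Seg → ℤ} {Δ : ℕ → LSeg} {l : ℕ}

theorem eq_one_of_special (hseq : IsInitSeq m ε Δ l) (h : Special ε (Δ 1)) : l = 1 := by
  by_contra hl
  exact hseq.not_special 1 le_rfl (lt_of_le_of_ne hseq.one_le (Ne.symm hl)) h

theorem eq_one_of_forall_end_ne (hseq : IsInitSeq m ε Δ l)
    (h : ∀ Λ ∈ smap m, Λ.1.2 ≠ (Δ 1).1.2 - 2) : l = 1 := by
  by_contra hl
  have h1l : 1 < l := lt_of_le_of_ne hseq.one_le (Ne.symm hl)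
  exact h _ (hseq.mem 2 one_le_two h1l) (hseq.succ 1 le_rfl h1l).2.1

theorem first_eq (hseq : IsInitSeq m ε Δ l) {Λ : LSeg} (hΛ : Λ ∈ smap m)
    (hend : ∀ Λ' ∈ smap m, Λ'.1.2 ≤ Λ.1.2)
    (hmax : ∀ Λ' ∈ smap m, Λ'.1.2 = Λ.1.2 → LSeg.le Λ Λ' → Λ' = Λ) : Δ 1 = Λ := by
  have hΔ1 := hseq.mem 1 le_rfl hseq.one_le
  have hend1 : (Δ 1).1.2 = Λ.1.2 := le_antisymm (hend _ hΔ1) (hseq.first_max_end Λ hΛ)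
  exact hmax _ hΔ1 hend1 (hseq.first_max Λ hΛ hend1.symm)

end IsInitSeq

def halfMSeg (c n : ℕ) : Multiset Seg :=
  replicate c (-1, 1) + replicate n (-1, -1) + replicate n (1, 1)

theorem mem_halfMSeg {c n : ℕ} {x : Seg} (hx : x ∈ halfMSeg c n) :
    x = (-1, 1) ∨ x = (-1, -1) ∨ x = (1, 1) := by
  simp only [halfMSeg, mem_add, mem_replicate] at hx
  tauto

theorem halfMSeg_succ (c n : ℕ) : halfMSeg c (n + 1) = (1, 1) ::ₘ (-1, -1) ::ₘ halfMSeg c n := by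
  simp only [halfMSeg, replicate_succ, add_cons, cons_add]

theorem smap_halfMSeg_succ (c n : ℕ) :
    smap (halfMSeg c (n + 1)) =
      ((1, 1), Label.ge0) ::ₘ ((-1, -1), Label.le0) ::ₘ smap (halfMSeg c n) := by
  rw [halfMSeg_succ, smap_cons_of_not_centered (by decide), smap_cons_of_not_centered (by decide)]
  rfl

theorem smap_halfMSeg_zero (c : ℕ) :
    smap (halfMSeg c 0) = replicate (c / 2) ((-1, 1), Label.le0) +
      replicate (c / 2) ((-1, 1), Label.ge0) + replicate (c % 2) ((-1, 1), Label.eq0) := by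
  simpa [halfMSeg] using smap_replicate_of_centered (Δ := (-1, 1)) (by decide) c

theorem nCentered_halfMSeg (c n : ℕ) : nCentered (halfMSeg c n) = c := by
  induction n with
  | zero =>
    simp only [nCentered, halfMSeg, replicate_zero, add_zero]
    rw [filter_eq_self.2 fun x hx => by rw [eq_of_mem_replicate hx]; decide, card_replicate]
  | succ n ih =>
    rw [nCentered, halfMSeg_succ, filter_cons_of_neg _ (by decide),
      filter_cons_of_neg _ (by decide)]
    exact ih

namespace IsInitSeq

variable {c n : ℕ} {ε : Seg → ℤ} {Δ : ℕ → LSeg} {l : ℕ}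

theorem halfMSeg_succ_eq (hseq : IsInitSeq (halfMSeg c (n + 1)) ε Δ l) :
    l = 1 ∧ Δ 1 = ((1, 1), Label.ge0) := by
  have hΛ : ((((1 : ℤ), (1 : ℤ)), Label.ge0) : LSeg) ∈ smap (halfMSeg c (n + 1)) := by
    rw [smap_halfMSeg_succ]; exact mem_cons_self _ _
  have hΔ1 : Δ 1 = ((1, 1), Label.ge0) := by
    refine hseq.first_eq hΛ (fun Λ hΛ' => ?_) fun Λ hΛ' hend hle => ?_
    · rcases mem_halfMSeg (fst_mem_of_mem_smap hΛ') with h | h | h <;> simp [h]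
    · obtain ⟨Θ, lab⟩ := Λ
      rcases mem_halfMSeg (fst_mem_of_mem_smap hΛ') with rfl | rfl | rfl <;>
        cases lab <;> simp_all [LSeg.le, Label.idx, Seg.le]
  exact ⟨hseq.eq_one_of_special (by rw [hΔ1]; exact Or.inr (Or.inl rfl)), hΔ1⟩

theorem halfMSeg_zero_eq (hseq : IsInitSeq (halfMSeg c 0) ε Δ l) :
    l = 1 ∧ ∃ lab, lab ≠ Label.le0 ∧ Δ 1 = ((-1, 1), lab) := by
  have hfst : ∀ Λ ∈ smap (halfMSeg c 0), Λ.1 = (-1, 1) := fun Λ hΛ =>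
    eq_of_mem_replicate (by simpa [halfMSeg] using fst_mem_of_mem_smap hΛ)
  have hΔ1 := hfst _ (hseq.mem 1 le_rfl hseq.one_le)
  refine ⟨hseq.eq_one_of_forall_end_ne fun Λ hΛ => by simp [hfst Λ hΛ, hΔ1],
    (Δ 1).2, fun hlab => ?_, Prod.ext hΔ1 rfl⟩
  have hge : (((-1 : ℤ), (1 : ℤ)), Label.ge0) ∈ smap (halfMSeg c 0) := by
    have hle := hseq.mem 1 le_rfl hseq.one_le
    rw [smap_halfMSeg_zero] at hle ⊢
    simp_all [mem_replicate, Prod.ext_iff]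
  have := hseq.first_max _ hge (by simp [hΔ1])
  rw [show Δ 1 = ((-1, 1), Label.le0) from Prod.ext hΔ1 hlab] at this
  simp [LSeg.le, Label.idx] at this

end IsInitSeq

namespace IsAD

variable {c n : ℕ} {ε : Seg → ℤ} {d : Multiset (Seg × ℤ)}

theorem halfMSeg_succ_step (had : IsAD (halfMSeg c (n + 1)) ε d) :
    ∃ ε' d', ε' (-1, 1) = -ε (-1, 1) ∧ IsAD (halfMSeg c n) ε' d' ∧
      d = ((-1, 1), (-1) ^ c) ::ₘ d' := by
  obtain ⟨Δ, l, d', hseq, hrec, rfl⟩ := had.exists_step (by simp [halfMSeg_succ])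
  obtain ⟨rfl, hΔ1⟩ := hseq.halfMSeg_succ_eq
  have hspecial : Special ε (Δ 1) := by rw [hΔ1]; exact Or.inr (Or.inl rfl)
  have hmHash : mHash (halfMSeg c (n + 1)) Δ 1 = halfMSeg c n := by
    rw [mHash_one_of_dual_ne (by rw [hΔ1]; decide) (by rw [hΔ1]; decide), smap_halfMSeg_succ, hΔ1,
      show LSeg.dual ((1, 1), Label.ge0) = ((-1, -1), Label.le0) from rfl,
      erase_cons_head, erase_cons_head, map_fst_smap]
  refine ⟨_, d', ?_, hmHash ▸ hrec, ?_⟩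
  · rw [epsHash_of_forall_end_ne (by simp [hΔ1]), eps0, if_pos hspecial, neg_one_mul]
  · rw [mOne, if_pos hspecial, epsOne, nCentered_halfMSeg, hΔ1]
    simp

theorem halfMSeg_zero_step (had : IsAD (halfMSeg (c + 1) 0) ε d) :
    ∃ ε' d', ε' (-1, 1) ≠ -1 ∧ IsAD (halfMSeg c 0) ε' d' ∧
      d = (if ε (-1, 1) = -1 then {((-1, 1), (-1) ^ (c + 1))}
        else {((1, 1), 1), ((-1, -1), 1)}) + d' := by
  obtain ⟨Δ, l, d', hseq, hrec, rfl⟩ := had.exists_step (by simp [halfMSeg])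
  obtain ⟨rfl, lab, hlab, hΔ1⟩ := hseq.halfMSeg_zero_eq
  have hspecial : Special ε (Δ 1) ↔ ε (-1, 1) = -1 := by
    rw [hΔ1]; cases lab <;> simp_all [Special]
  have hmHash : mHash (halfMSeg (c + 1) 0) Δ 1 = halfMSeg c 0 := by
    have hdual : LSeg.dual (Δ 1) = Δ 1 := by rw [hΔ1]; cases lab <;> simp_all [LSeg.dual, Seg.dual]
    rw [mHash_one_of_dual_eq hdual (by simp [hΔ1]),
      map_erase_of_mem _ _ (hseq.mem 1 le_rfl le_rfl), map_fst_smap, hΔ1]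
    simp [halfMSeg, replicate_succ]
  refine ⟨_, d', ?_, hmHash ▸ hrec, ?_⟩
  · rw [epsHash_of_forall_end_ne (by simp [hΔ1]), eps0]
    by_cases h : ε (-1, 1) = -1 <;> simp [hspecial, h]
  · by_cases h : ε (-1, 1) = -1
    · rw [mOne, if_pos (hspecial.2 h), epsOne, nCentered_halfMSeg, hΔ1, if_pos h]
      simp
    · rw [mOne, if_neg (mt hspecial.1 h), hΔ1, if_neg h]

end IsAD

def adHalf (c n : ℕ) (e : ℤ) : Multiset (Seg × ℤ) :=
  if c ≠ 0 ∧ e = (-1) ^ (n + 1) then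
    replicate (n + 1) ((-1, 1), (-1) ^ c) + replicate (c - 1) ((-1, -1), 1) +
      replicate (c - 1) ((1, 1), 1)
  else
    replicate n ((-1, 1), (-1) ^ c) + replicate c ((-1, -1), 1) + replicate c ((1, 1), 1)

theorem adHalf_succ (c n : ℕ) (e : ℤ) :
    adHalf c (n + 1) e = ((-1, 1), (-1) ^ c) ::ₘ adHalf c n (-e) := by
  have hcond : (c ≠ 0 ∧ e = (-1) ^ (n + 1 + 1)) ↔ (c ≠ 0 ∧ -e = (-1) ^ (n + 1)) := by
    rw [pow_succ, mul_neg_one, neg_eq_iff_eq_neg]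
  unfold adHalf
  split_ifs <;> simp_all [replicate_succ]

theorem adHalf_zero_of_ne (c : ℕ) {e : ℤ} (he : e ≠ -1) :
    adHalf c 0 e = replicate c ((-1, -1), 1) + replicate c ((1, 1), 1) := by
  simp [adHalf, he]

theorem IsAD.eq_adHalf_zero {c : ℕ} {ε : Seg → ℤ} {d : Multiset (Seg × ℤ)}
    (had : IsAD (halfMSeg c 0) ε d) : d = adHalf c 0 (ε (-1, 1)) := by
  induction c generalizing ε d with
  | zero => simpa [adHalf] using had.eq_zero
  | succ c ih =>
    obtain ⟨ε', d', hε', hrec, rfl⟩ := had.halfMSeg_zero_step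
    rw [ih hrec, adHalf_zero_of_ne c hε']
    by_cases h : ε (-1, 1) = -1 <;> simp [adHalf, h, replicate_succ]

theorem IsAD.eq_adHalf {c n : ℕ} {ε : Seg → ℤ} {d : Multiset (Seg × ℤ)}
    (had : IsAD (halfMSeg c n) ε d) : d = adHalf c n (ε (-1, 1)) := by
  induction n generalizing ε d with
  | zero => exact had.eq_adHalf_zero
  | succ n ih =>
    obtain ⟨ε', d', hε', hrec, rfl⟩ := had.halfMSeg_succ_step
    rw [ih hrec, hε', adHalf_succ]

theorem stmt17_general (c n : ℕ) (ε : Seg → ℤ)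
    (d : Multiset (Seg × ℤ))
    (had : IsAD
      (Multiset.replicate c (((-1 : ℤ), (1 : ℤ)) : Seg) +
        Multiset.replicate n (((-1 : ℤ), (-1 : ℤ)) : Seg) +
        Multiset.replicate n (((1 : ℤ), (1 : ℤ)) : Seg))
      ε d) :
    (c ≠ 0 ∧ ε (-1, 1) = (-1) ^ (n + 1) →
      d = Multiset.replicate (n + 1) ((((-1 : ℤ), (1 : ℤ)) : Seg), (-1) ^ c) +
        Multiset.replicate (c - 1) ((((-1 : ℤ), (-1 : ℤ)) : Seg), 1) +
        Multiset.replicate (c - 1) ((((1 : ℤ), (1 : ℤ)) : Seg), 1)) ∧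
    (¬(c ≠ 0 ∧ ε (-1, 1) = (-1) ^ (n + 1)) →
      d = Multiset.replicate n ((((-1 : ℤ), (1 : ℤ)) : Seg), (-1) ^ c) +
        Multiset.replicate c ((((-1 : ℤ), (-1 : ℤ)) : Seg), 1) +
        Multiset.replicate c ((((1 : ℤ), (1 : ℤ)) : Seg), 1)) := by
  have hd : d = adHalf c n (ε (-1, 1)) := had.eq_adHalf
  exact ⟨fun h => by rw [hd, adHalf, if_pos h], fun h => by rw [hd, adHalf, if_neg h]⟩

/-- Proposition 10.3.1: explicit computation of `AD` on
`𝔪 = c·[−1/2,1/2] + n·([−1/2,−1/2] + [1/2,1/2])` (half-integer case). -/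
theorem stmt17 (c n : ℕ) (ε : Seg → ℤ)
    (hsign : ∀ Δ0 : Seg, ε Δ0 = 1 ∨ ε Δ0 = -1)
    (d : Multiset (Seg × ℤ))
    (had : IsAD
      (Multiset.replicate c (((-1 : ℤ), (1 : ℤ)) : Seg) +
        Multiset.replicate n (((-1 : ℤ), (-1 : ℤ)) : Seg) +
        Multiset.replicate n (((1 : ℤ), (1 : ℤ)) : Seg))
      ε d) :
    (c ≠ 0 ∧ ε (-1, 1) = (-1) ^ (n + 1) →
      d = Multiset.replicate (n + 1) ((((-1 : ℤ), (1 : ℤ)) : Seg), (-1) ^ c) +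
        Multiset.replicate (c - 1) ((((-1 : ℤ), (-1 : ℤ)) : Seg), 1) +
        Multiset.replicate (c - 1) ((((1 : ℤ), (1 : ℤ)) : Seg), 1)) ∧
    (¬(c ≠ 0 ∧ ε (-1, 1) = (-1) ^ (n + 1)) →
      d = Multiset.replicate n ((((-1 : ℤ), (1 : ℤ)) : Seg), (-1) ^ c) +
        Multiset.replicate c ((((-1 : ℤ), (-1 : ℤ)) : Seg), 1) +
        Multiset.replicate c ((((1 : ℤ), (1 : ℤ)) : Seg), 1)) :=
  stmt17_general c n ε d had

end AZ
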